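/- arXiv:2402.06303 — 6 statements merged into one kernel-verified Lean document; each statement's English description precedes it below -/
import Mathlib

section
/- Let f be an element of the disk algebra A(𝔻). Then f is a topological divisor of zero in A(𝔻) if and only if there exists a point z₀ with |z₀| = 1 such that f(z₀) = 0. -/
open Filter

/-- The sup-norm over the closed unit disk. -/
noncomputable def diskSupNorm (f : ℂ → ℂ) : ℝ :=
  sSup ((fun z => ‖f z‖) '' Metric.closedBall (0 : ℂ) 1)

/-- Membership in the disk algebra `A(𝔻)`: continuous on the closed unit disk and
analytic on the open unit disk. -/
def MemDiskAlgebra (f : ℂ → ℂ) : Prop :=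
  ContinuousOn f (Metric.closedBall (0 : ℂ) 1) ∧
    DifferentiableOn ℂ f (Metric.ball (0 : ℂ) 1)

/-- `f` is a topological divisor of zero in the (commutative) Banach algebra `A(𝔻)`:
there is a sequence of elements of `A(𝔻)` of norm one whose products with `f`
tend to zero in norm. -/
def IsTDZDiskAlgebra (f : ℂ → ℂ) : Prop :=
  ∃ g : ℕ → ℂ → ℂ,
    (∀ n, MemDiskAlgebra (g n) ∧ diskSupNorm (g n) = 1) ∧
    (Tendsto (fun n => diskSupNorm (fun z => f z * g n z)) atTop (nhds 0) ∨
      Tendsto (fun n => diskSupNorm (fun z => g n z * f z)) atTop (nhds 0))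

/-!
If `f` has no zero on the circle, then `|f| ≥ m > 0` there, and by the maximum modulus principle
`‖f g‖ ≥ m ‖g‖` for every `g ∈ A(𝔻)`, so `f` is not a topological divisor of zero.
Conversely, if `f z₀ = 0` with `|z₀| = 1`, the powers of the peak function `q(z) = (1 + z / z₀) / 2`
have norm `1`, while `f qⁿ → 0` uniformly: near `z₀` because `f` is small there and `|q| ≤ 1`,
and near any other point `z` because `|q(z)| < 1`.
-/

open Metric Topology

section DiskSupNorm

variable {f : ℂ → ℂ}

lemma diskSupNorm_nonneg (f : ℂ → ℂ) : 0 ≤ diskSupNorm f :=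
  Real.sSup_nonneg (by rintro _ ⟨z, -, rfl⟩; exact norm_nonneg _)

lemma norm_le_diskSupNorm (hf : ContinuousOn f (closedBall 0 1)) {z : ℂ}
    (hz : z ∈ closedBall (0 : ℂ) 1) : ‖f z‖ ≤ diskSupNorm f :=
  le_csSup ((isCompact_closedBall _ _).image_of_continuousOn hf.norm).bddAbove ⟨z, hz, rfl⟩

lemma diskSupNorm_le {C : ℝ} (hC : 0 ≤ C) (h : ∀ z ∈ closedBall (0 : ℂ) 1, ‖f z‖ ≤ C) :
    diskSupNorm f ≤ C :=
  Real.sSup_le (by rintro _ ⟨z, hz, rfl⟩; exact h z hz) hC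

lemma tendsto_diskSupNorm_of_tendstoUniformlyOn {F : ℕ → ℂ → ℂ}
    (hF : TendstoUniformlyOn F 0 atTop (closedBall 0 1)) :
    Tendsto (fun n => diskSupNorm (F n)) atTop (𝓝 0) := by
  refine Metric.tendsto_nhds.2 fun ε hε => ?_
  filter_upwards [Metric.tendstoUniformlyOn_iff.1 hF (ε / 2) (half_pos hε)] with n hn
  have hle : diskSupNorm (F n) ≤ ε / 2 :=
    diskSupNorm_le (half_pos hε).le fun z hz => by simpa using (hn z hz).le
  rw [Real.dist_eq, sub_zero, abs_of_nonneg (diskSupNorm_nonneg _)]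
  linarith

end DiskSupNorm

theorem MemDiskAlgebra.norm_le_of_forall_sphere_norm_le {g : ℂ → ℂ} (hg : MemDiskAlgebra g)
    {C : ℝ} (hC : ∀ z ∈ sphere (0 : ℂ) 1, ‖g z‖ ≤ C) {z : ℂ} (hz : z ∈ closedBall (0 : ℂ) 1) :
    ‖g z‖ ≤ C := by
  have hcl : closure (ball (0 : ℂ) 1) = closedBall 0 1 := closure_ball 0 one_ne_zero
  refine Complex.norm_le_of_forall_mem_frontier_norm_le isBounded_ball
    ⟨hg.2, hcl ▸ hg.1⟩ (fun w hw => hC w ?_) (hcl ▸ hz)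
  rwa [frontier_ball 0 one_ne_zero] at hw

theorem mul_diskSupNorm_le_diskSupNorm_mul {f g : ℂ → ℂ} (hf : ContinuousOn f (closedBall 0 1))
    (hg : MemDiskAlgebra g) {m : ℝ} (hm : 0 < m) (hfm : ∀ z ∈ sphere (0 : ℂ) 1, m ≤ ‖f z‖) :
    m * diskSupNorm g ≤ diskSupNorm (fun z => f z * g z) := by
  set S := diskSupNorm (fun z => f z * g z)
  have hsphere : ∀ z ∈ sphere (0 : ℂ) 1, ‖g z‖ ≤ S / m := fun z hz => by
    rw [le_div_iff₀ hm]
    calc ‖g z‖ * m ≤ ‖g z‖ * ‖f z‖ := by gcongr; exact hfm z hz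
      _ = ‖f z * g z‖ := by rw [norm_mul, mul_comm]
      _ ≤ S := norm_le_diskSupNorm (hf.mul hg.1) (sphere_subset_closedBall hz)
  rw [← le_div_iff₀' hm]
  exact diskSupNorm_le (div_nonneg (diskSupNorm_nonneg _) hm.le)
    fun z hz => hg.norm_le_of_forall_sphere_norm_le hsphere hz

theorem exists_zero_on_circle_of_isTDZDiskAlgebra {f : ℂ → ℂ}
    (hf : ContinuousOn f (closedBall 0 1)) (htdz : IsTDZDiskAlgebra f) :
    ∃ z₀ : ℂ, ‖z₀‖ = 1 ∧ f z₀ = 0 := by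
  by_contra! hne
  obtain ⟨z₁, hz₁, hmin⟩ := (isCompact_sphere (0 : ℂ) 1).exists_isMinOn
    (NormedSpace.sphere_nonempty.2 zero_le_one) (hf.mono sphere_subset_closedBall).norm
  have hm : 0 < ‖f z₁‖ := norm_pos_iff.2 (hne z₁ (by simpa using hz₁))
  obtain ⟨g, hg, hlim⟩ := htdz
  have hlim' : Tendsto (fun n => diskSupNorm (fun z => f z * g n z)) atTop (𝓝 0) := by
    rcases hlim with h | h
    · exact h
    · simpa only [mul_comm] using h
  refine hm.not_ge (ge_of_tendsto' hlim' fun n => ?_)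
  simpa [(hg n).2] using
    mul_diskSupNorm_le_diskSupNorm_mul hf (hg n).1 hm fun z hz => hmin hz

theorem tendstoUniformlyOn_mul_pow {X 𝕜 : Type*} [TopologicalSpace X] [NormedField 𝕜]
    {s : Set X} (hs : IsCompact s) {f q : X → 𝕜} (hf : ContinuousOn f s) (hq : ContinuousOn q s)
    (hq_le : ∀ x ∈ s, ‖q x‖ ≤ 1) (hfq : ∀ x ∈ s, f x = 0 ∨ ‖q x‖ < 1) :
    TendstoUniformlyOn (fun n x => f x * q x ^ n) 0 atTop s := by
  refine (tendstoLocallyUniformlyOn_iff_tendstoUniformlyOn_of_compact hs).1 <|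
    Metric.tendstoLocallyUniformlyOn_iff.2 fun ε hε x hx => ?_
  simp only [Pi.zero_apply, dist_zero_left, norm_mul, norm_pow]
  rcases hfq x hx with hfx | hqx
  · have hf0 : Tendsto (fun y => ‖f y‖) (𝓝[s] x) (𝓝 0) := by
      simpa [ContinuousWithinAt, hfx] using (hf x hx).norm
    have hsmall : ∀ᶠ y in 𝓝[s] x, ‖f y‖ < ε := hf0.eventually (gt_mem_nhds hε)
    refine ⟨_, inter_mem hsmall self_mem_nhdsWithin, Eventually.of_forall fun n y ⟨hfy, hys⟩ => ?_⟩
    calc ‖f y‖ * ‖q y‖ ^ n ≤ ‖f y‖ * 1 := by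
          gcongr; exact pow_le_one₀ (norm_nonneg _) (hq_le y hys)
      _ = ‖f y‖ := mul_one _
      _ < ε := hfy
  · obtain ⟨r, hqr, hr1⟩ := exists_between hqx
    have hfC : ∀ᶠ y in 𝓝[s] x, ‖f y‖ < ‖f x‖ + 1 :=
      (hf x hx).norm.eventually (gt_mem_nhds (lt_add_one _))
    have hqr' : ∀ᶠ y in 𝓝[s] x, ‖q y‖ < r := (hq x hx).norm.eventually (gt_mem_nhds hqr)
    have hdecay : Tendsto (fun n : ℕ => (‖f x‖ + 1) * r ^ n) atTop (𝓝 0) := by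
      simpa using (tendsto_pow_atTop_nhds_zero_of_lt_one
        ((norm_nonneg _).trans hqr.le) hr1).const_mul (‖f x‖ + 1)
    refine ⟨_, inter_mem hfC hqr', (hdecay.eventually (gt_mem_nhds hε)).mono
      fun n hn y ⟨hfy, hqy⟩ => ?_⟩
    calc ‖f y‖ * ‖q y‖ ^ n ≤ (‖f x‖ + 1) * r ^ n := by gcongr; exacts [hfy.le, hqy.le]
      _ < ε := hn

noncomputable def peakAt (z₀ z : ℂ) : ℂ := (1 + z / z₀) / 2

section PeakAt

variable {z₀ z : ℂ}

lemma peakAt_self (hz₀ : ‖z₀‖ = 1) : peakAt z₀ z₀ = 1 := by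
  have : z₀ ≠ 0 := norm_ne_zero_iff.1 (by rw [hz₀]; exact one_ne_zero)
  simp [peakAt, this]

lemma differentiable_peakAt (z₀ : ℂ) : Differentiable ℂ (peakAt z₀) :=
  ((differentiable_id.div_const z₀).const_add 1).div_const 2

lemma norm_peakAt_le_one (hz₀ : ‖z₀‖ = 1) (hz : ‖z‖ ≤ 1) : ‖peakAt z₀ z‖ ≤ 1 := by
  rw [peakAt, norm_div, Complex.norm_two, div_le_one two_pos]
  exact (norm_add_le _ _).trans (by rw [norm_one, norm_div, hz₀, div_one]; linarith)

lemma norm_peakAt_lt_one (hz₀ : ‖z₀‖ = 1) (hz : ‖z‖ ≤ 1) (hne : z ≠ z₀) :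
    ‖peakAt z₀ z‖ < 1 := by
  have h0 : z₀ ≠ 0 := norm_ne_zero_iff.1 (by rw [hz₀]; exact one_ne_zero)
  have hw : ‖z / z₀‖ ≤ 1 := by rwa [norm_div, hz₀, div_one]
  have hne' : (1 : ℂ) ≠ z / z₀ := fun h => hne ((div_eq_one_iff_eq h0).1 h.symm)
  have key := norm_combo_lt_of_ne (norm_one.le) hw hne' (half_pos one_pos) (half_pos one_pos)
    (add_halves 1)
  calc ‖peakAt z₀ z‖ = ‖(1 / 2 : ℝ) • (1 : ℂ) + (1 / 2 : ℝ) • (z / z₀)‖ := by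
        rw [peakAt, Complex.real_smul, Complex.real_smul]; push_cast; ring_nf
    _ < 1 := key

end PeakAt

lemma memDiskAlgebra_peakAt_pow (z₀ : ℂ) (n : ℕ) : MemDiskAlgebra (fun z => peakAt z₀ z ^ n) :=
  let h := (differentiable_peakAt z₀).pow n
  ⟨h.continuous.continuousOn, h.differentiableOn⟩

lemma diskSupNorm_peakAt_pow {z₀ : ℂ} (hz₀ : ‖z₀‖ = 1) (n : ℕ) :
    diskSupNorm (fun z => peakAt z₀ z ^ n) = 1 := by
  refine le_antisymm (diskSupNorm_le zero_le_one fun z hz => ?_) ?_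
  · rw [norm_pow]
    exact pow_le_one₀ (norm_nonneg _) (norm_peakAt_le_one hz₀ (mem_closedBall_zero_iff.1 hz))
  · simpa [peakAt_self hz₀] using
      norm_le_diskSupNorm (memDiskAlgebra_peakAt_pow z₀ n).1 (mem_closedBall_zero_iff.2 hz₀.le)

theorem isTDZDiskAlgebra_of_eq_zero {f : ℂ → ℂ} (hf : ContinuousOn f (closedBall 0 1)) {z₀ : ℂ}
    (hz₀ : ‖z₀‖ = 1) (hf₀ : f z₀ = 0) : IsTDZDiskAlgebra f := by
  refine ⟨fun n z => peakAt z₀ z ^ n,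
    fun n => ⟨memDiskAlgebra_peakAt_pow z₀ n, diskSupNorm_peakAt_pow hz₀ n⟩, Or.inl ?_⟩
  refine tendsto_diskSupNorm_of_tendstoUniformlyOn <| tendstoUniformlyOn_mul_pow
    (isCompact_closedBall 0 1) hf (differentiable_peakAt z₀).continuous.continuousOn
    (fun z hz => norm_peakAt_le_one hz₀ (mem_closedBall_zero_iff.1 hz)) fun z hz => ?_
  rcases eq_or_ne z z₀ with rfl | hne
  · exact Or.inl hf₀
  · exact Or.inr (norm_peakAt_lt_one hz₀ (mem_closedBall_zero_iff.1 hz) hne)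

/-- An element `f ∈ A(𝔻)` is a topological divisor of zero if and only if
there exists `z₀ ∈ 𝕋` (the unit circle) such that `f z₀ = 0`. -/
theorem tdz_diskAlgebra_iff_exists_zero_on_circle (f : ℂ → ℂ) (hf : MemDiskAlgebra f) :
    IsTDZDiskAlgebra f ↔ ∃ z₀ : ℂ, ‖z₀‖ = 1 ∧ f z₀ = 0 :=
  ⟨exists_zero_on_circle_of_isTDZDiskAlgebra hf.1,
    fun ⟨_, hz₀, hf₀⟩ => isTDZDiskAlgebra_of_eq_zero hf.1 hz₀ hf₀⟩
end

section
/- Let (X, Σ, μ) be a measure space and f ∈ L^∞(μ). Then f is a topological divisor of zero in L^∞(μ) if and only if there exists a sequence (Eₙ) of measurable subsets of X with μ(Eₙ) > 0 for each n ≥ 1 such that ‖f|_{Eₙ}‖ → 0 as n → ∞, where ‖f|_{Eₙ}‖ denotes the essential supremum of |f| over Eₙ. -/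
open MeasureTheory Filter ENNReal

/-- `f` is a topological divisor of zero in the (commutative) Banach algebra `L^∞(μ)`:
there is a sequence of elements of `L^∞(μ)` of norm one whose products with `f`
tend to zero in norm. -/
def IsTDZLinfty {X : Type*} [MeasurableSpace X] (μ : Measure X) (f : Lp ℂ ⊤ μ) : Prop :=
  ∃ g : ℕ → Lp ℂ ⊤ μ, (∀ n, ‖g n‖ = 1) ∧
    (Tendsto (fun n => (eLpNorm (⇑f * ⇑(g n) : X → ℂ) ⊤ μ).toReal) atTop (nhds 0) ∨
      Tendsto (fun n => (eLpNorm (⇑(g n) * ⇑f : X → ℂ) ⊤ μ).toReal) atTop (nhds 0))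

/-!
If `‖gₙ‖ = 1` and `f gₙ → 0`, then `Eₙ = {|gₙ| > 1/2}` has positive measure and
`|f| ≤ 2 |f gₙ|` on `Eₙ`. Conversely, the indicators `1_{Eₙ}` have norm one and
`‖f 1_{Eₙ}‖ = ‖f|_{Eₙ}‖`.
-/

lemma ENNReal.tendsto_toReal_zero_of_const_mul_le {ι : Type*} {l : Filter ι}
    {u v : ι → ℝ≥0∞} {c : ℝ≥0∞} (hc : c ≠ 0) (hv : ∀ i, v i ≠ ∞) (huv : ∀ i, c * u i ≤ v i)
    (h : Tendsto (fun i => (v i).toReal) l (nhds 0)) :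
    Tendsto (fun i => (u i).toReal) l (nhds 0) := by
  have hu : ∀ i, (u i).toReal ≤ (v i).toReal / c.toReal := fun i => by
    rw [← ENNReal.toReal_div]
    refine ENNReal.toReal_mono (div_ne_top (hv i) hc) ?_
    rw [ENNReal.le_div_iff_mul_le (.inl hc) (.inr (hv i)), mul_comm]
    exact huv i
  exact squeeze_zero (fun _ => toReal_nonneg) hu (by simpa using h.div_const c.toReal)

section

variable {X : Type*} [MeasurableSpace X] {μ : Measure X}

lemma measure_lt_enorm_pos_of_lt_eLpNorm_top {ε : Type*} [ENorm ε]
    {g : X → ε} {c : ℝ≥0∞} (hc : c < eLpNorm g ∞ μ) : 0 < μ {x | c < ‖g x‖ₑ} := by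
  refine pos_iff_ne_zero.2 fun h => hc.not_ge ?_
  rw [eLpNorm_exponent_top]
  exact eLpNormEssSup_le_of_ae_enorm_bound (by simpa [ae_iff] using h)

lemma const_mul_eLpNorm_top_restrict_le {𝕜 : Type*} [SeminormedRing 𝕜] [NormMulClass 𝕜]
    (f : X → 𝕜) {g : X → 𝕜} (hg : StronglyMeasurable g) (c : ℝ≥0∞) :
    c * eLpNorm f ∞ (μ.restrict {x | c < ‖g x‖ₑ}) ≤ eLpNorm (f * g) ∞ μ := by
  have hs : MeasurableSet {x | c < ‖g x‖ₑ} :=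
    measurableSet_lt measurable_const hg.enorm
  rw [eLpNorm_exponent_top, eLpNorm_exponent_top, eLpNormEssSup, ← ENNReal.essSup_const_mul]
  refine essSup_le_of_ae_le _ ?_
  filter_upwards [ae_restrict_mem hs, ae_restrict_of_ae (enorm_ae_le_eLpNormEssSup (f * g) μ)]
    with x (hx : c < ‖g x‖ₑ) hfg
  calc c * ‖f x‖ₑ ≤ ‖f x‖ₑ * ‖g x‖ₑ := by rw [mul_comm]; gcongr
    _ = ‖(f * g) x‖ₑ := by simp
    _ ≤ eLpNormEssSup (f * g) μ := hfg

lemma eLpNorm_mul_indicator_one {𝕜 : Type*} [NormedRing 𝕜] (f : X → 𝕜) {s : Set X}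
    (hs : MeasurableSet s) (p : ℝ≥0∞) :
    eLpNorm (f * s.indicator 1) p μ = eLpNorm f p (μ.restrict s) := by
  have h_mul : f * s.indicator 1 = s.indicator f := funext fun x => by
    simpa using (Set.indicator_mul_right s f 1).symm
  rw [h_mul]
  exact eLpNorm_indicator_eq_eLpNorm_restrict hs

lemma memLp_top_indicator_one {𝕜 : Type*} [NormedRing 𝕜] {s : Set X} (hs : MeasurableSet s) :
    MemLp (s.indicator (1 : X → 𝕜)) ∞ μ :=
  (memLp_top_const 1).indicator hs

lemma norm_toLp_indicator_one {𝕜 : Type*} [NormedRing 𝕜] [NormOneClass 𝕜] {s : Set X}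
    (hs : MeasurableSet s) (hμs : μ s ≠ 0) :
    ‖(memLp_top_indicator_one (𝕜 := 𝕜) (μ := μ) hs).toLp‖ = 1 := by
  rw [Lp.norm_def, eLpNorm_congr_ae (memLp_top_indicator_one hs).coeFn_toLp, eLpNorm_exponent_top]
  simp [Pi.one_def, eLpNormEssSup_indicator_const_eq s (1 : 𝕜) hμs]

end

lemma isTDZLinfty_iff_tendsto_mul {X : Type*} [MeasurableSpace X] {μ : Measure X}
    {f : Lp ℂ ⊤ μ} :
    IsTDZLinfty μ f ↔ ∃ g : ℕ → Lp ℂ ⊤ μ, (∀ n, ‖g n‖ = 1) ∧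
      Tendsto (fun n => (eLpNorm (⇑f * ⇑(g n) : X → ℂ) ⊤ μ).toReal) atTop (nhds 0) := by
  simp only [IsTDZLinfty, mul_comm _ (⇑f), or_self]

/-- `f ∈ L^∞(μ)` is a topological divisor of zero if and only if there is a sequence
`(Eₙ)` of measurable sets of positive measure with `‖f|_{Eₙ}‖ → 0`, where `‖f|_{Eₙ}‖`
is the essential supremum of `|f|` over `Eₙ`. -/
theorem linfty_tdz_iff_exists_sets {X : Type*} [MeasurableSpace X] (μ : Measure X)
    (f : Lp ℂ ⊤ μ) :
    IsTDZLinfty μ f ↔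
      ∃ E : ℕ → Set X, (∀ n, MeasurableSet (E n) ∧ 0 < μ (E n)) ∧
        Tendsto (fun n => (eLpNorm (⇑f : X → ℂ) ⊤ (μ.restrict (E n))).toReal)
          atTop (nhds 0) := by
  rw [isTDZLinfty_iff_tendsto_mul]
  constructor
  · rintro ⟨g, hg, hfg⟩
    have hg_eLpNorm (n : ℕ) : eLpNorm (g n) ∞ μ = 1 := by
      rw [← Lp.enorm_def, ← ofReal_norm, hg n, ENNReal.ofReal_one]
    refine ⟨fun n => {x | 2⁻¹ < ‖g n x‖ₑ}, fun n => ⟨?_, ?_⟩, ?_⟩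
    · exact measurableSet_lt measurable_const (Lp.stronglyMeasurable _).enorm
    · exact measure_lt_enorm_pos_of_lt_eLpNorm_top (by simp [hg_eLpNorm])
    · exact ENNReal.tendsto_toReal_zero_of_const_mul_le (by norm_num)
        (fun n => ((Lp.memLp (g n)).mul (Lp.memLp f)).eLpNorm_ne_top)
        (fun n => const_mul_eLpNorm_top_restrict_le _ (Lp.stronglyMeasurable _) _) hfg
  · rintro ⟨E, hE, hfE⟩
    refine ⟨fun n => (memLp_top_indicator_one (hE n).1).toLp,
      fun n => norm_toLp_indicator_one (hE n).1 (hE n).2.ne', hfE.congr fun n => ?_⟩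
    rw [eLpNorm_congr_ae ((memLp_top_indicator_one (𝕜 := ℂ) (hE n).1).coeFn_toLp.mul_left),
      eLpNorm_mul_indicator_one _ (hE n).1]
end

section
/- Let 1 ≤ p < ∞ and let φ : ℕ → ℕ be a map such that the set {|φ⁻¹({n})| : n ∈ ℕ} of fiber cardinalities is bounded, so that the composition operator C_φ : ℓᵖ → ℓᵖ given by (C_φ f)(n) = f(φ(n)) is a bounded linear operator. Then C_φ is a right zero-divisor in B(ℓᵖ) (i.e., there exists S ∈ B(ℓᵖ) with S ≠ 0 and S∘C_φ = 0) if and only if φ is not injective. -/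
/-!
If `φ` is injective, every `g ∈ ℓᵖ` is `C_φ f` for `f` the extension of `g ∘ φ⁻¹` by zero off the
range of `φ`, so `C_φ` is surjective and cannot be a right zero-divisor. If `φ a = φ b` with
`a ≠ b`, then `C_φ f a = C_φ f b` for all `f`, so the nonzero rank-one operator
`f ↦ (f a - f b) • δ_a` annihilates the range of `C_φ`.
-/

open ENNReal

section CompositionOperator

variable {α β E : Type*} [NormedAddCommGroup E] {p : ℝ≥0∞} {φ : α → β}

theorem Memℓp.extend_zero (hφ : φ.Injective) {g : α → E} (hg : Memℓp g p) :
    Memℓp (Function.extend φ g 0) p := by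
  have hzero : ∀ b ∉ Set.range φ, Function.extend φ g 0 b = 0 := fun b hb =>
    Function.extend_apply' _ _ _ hb
  rcases p.trichotomy with rfl | rfl | hp
  · refine memℓp_zero ((memℓp_zero_iff.mp hg).image φ |>.subset ?_)
    intro b hb
    by_cases hbφ : b ∈ Set.range φ
    · obtain ⟨a, rfl⟩ := hbφ
      exact ⟨a, by simpa [hφ.extend_apply] using hb, rfl⟩
    · exact absurd (hzero b hbφ) hb
  · obtain ⟨M, hM⟩ := memℓp_infty_iff.mp hg
    refine memℓp_infty ⟨max M 0, ?_⟩
    rintro _ ⟨b, rfl⟩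
    by_cases hbφ : b ∈ Set.range φ
    · obtain ⟨a, rfl⟩ := hbφ
      simp only [hφ.extend_apply]
      exact le_max_of_le_left (hM ⟨a, rfl⟩)
    · simp [hzero b hbφ]
  · refine memℓp_gen ?_
    rw [← hφ.summable_iff fun b hb => by simp [hzero b hb, Real.zero_rpow hp.ne']]
    simpa [Function.comp_def, hφ.extend_apply] using hg.summable hp

theorem surjective_of_apply_eq_comp_of_injective (hφ : φ.Injective)
    (C : lp (fun _ : β => E) p → lp (fun _ : α => E) p) (hC : ∀ f n, C f n = f (φ n)) :
    Function.Surjective C := fun g =>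
  ⟨⟨_, (lp.memℓp g).extend_zero hφ⟩, lp.ext <| funext fun n => by simp [hC, hφ.extend_apply]⟩

variable {𝕜 : Type*} [NormedField 𝕜] [Fact (1 ≤ p)]

theorem exists_ne_zero_comp_eq_zero_of_apply_eq {a b : α} (hab : a ≠ b)
    (C : lp (fun _ : α => 𝕜) p →L[𝕜] lp (fun _ : α => 𝕜) p) (hC : ∀ f, C f a = C f b) :
    ∃ S : lp (fun _ : α => 𝕜) p →L[𝕜] lp (fun _ : α => 𝕜) p, S ≠ 0 ∧ S.comp C = 0 := by
  classical
  let e := lp.single (E := fun _ : α => 𝕜) p a 1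
  refine ⟨(lp.evalCLM 𝕜 (fun _ : α => 𝕜) p a - lp.evalCLM 𝕜 _ p b).smulRight e, fun hS => ?_, ?_⟩
  · have : (e a - e b) • e a = 0 := congr($hS e a)
    simp [e, Pi.single_eq_of_ne hab.symm] at this
  · ext f n
    simp [lp.evalCLM, hC]

end CompositionOperator

theorem composition_op_right_zeroDivisor_iff_general (p : ℝ≥0∞) [Fact (1 ≤ p)]
    (φ : ℕ → ℕ)
    (C : lp (fun _ : ℕ => ℂ) p →L[ℂ] lp (fun _ : ℕ => ℂ) p)
    (hC : ∀ (f : lp (fun _ : ℕ => ℂ) p) (n : ℕ), C f n = f (φ n)) :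
    (∃ S : lp (fun _ : ℕ => ℂ) p →L[ℂ] lp (fun _ : ℕ => ℂ) p, S ≠ 0 ∧ S.comp C = 0) ↔
      ¬ Function.Injective φ := by
  constructor
  · rintro ⟨S, hS, hSC⟩ hφ
    have hsurj := surjective_of_apply_eq_comp_of_injective hφ C hC
    exact hS <| ContinuousLinearMap.ext fun g => by
      obtain ⟨f, rfl⟩ := hsurj g
      exact congr($hSC f)
  · intro hφ
    obtain ⟨a, b, hab, hne⟩ := Function.not_injective_iff.mp hφ
    exact exists_ne_zero_comp_eq_zero_of_apply_eq hne C fun f => by rw [hC, hC, hab]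

/-- Let `1 ≤ p < ∞` and let `φ : ℕ → ℕ` have uniformly bounded fiber cardinalities, so
that the composition operator `C_φ : ℓᵖ → ℓᵖ`, `(C_φ f) n = f (φ n)`, is bounded. Then
`C_φ` is a right zero-divisor in `B(ℓᵖ)` if and only if `φ` is not injective. -/
theorem composition_op_right_zeroDivisor_iff (p : ℝ≥0∞) [Fact (1 ≤ p)] (hp : p ≠ ⊤)
    (φ : ℕ → ℕ)
    (hfib : ∃ N : ℕ, ∀ n : ℕ, (φ ⁻¹' {n}).Finite ∧ (φ ⁻¹' {n}).ncard ≤ N)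
    (C : lp (fun _ : ℕ => ℂ) p →L[ℂ] lp (fun _ : ℕ => ℂ) p)
    (hC : ∀ (f : lp (fun _ : ℕ => ℂ) p) (n : ℕ), C f n = f (φ n)) :
    (∃ S : lp (fun _ : ℕ => ℂ) p →L[ℂ] lp (fun _ : ℕ => ℂ) p, S ≠ 0 ∧ S.comp C = 0) ↔
      ¬ Function.Injective φ :=
  composition_op_right_zeroDivisor_iff_general p φ C hC
end

section
/- Let 1 ≤ p < ∞ and let φ : ℕ → ℕ be a map such that the set {|φ⁻¹({n})| : n ∈ ℕ} of fiber cardinalities is bounded, so that the composition operator C_φ : ℓᵖ → ℓᵖ given by (C_φ f)(n) = f(φ(n)) is a bounded linear operator. Then C_φ is a left zero-divisor in B(ℓᵖ) (i.e., there exists S ∈ B(ℓᵖ) with S ≠ 0 and C_φ∘S = 0) if and only if φ is not surjective. -/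
open Filter ENNReal

/-- Let `1 ≤ p < ∞` and let `φ : ℕ → ℕ` have uniformly bounded fiber cardinalities, so
that the composition operator `C_φ : ℓᵖ → ℓᵖ`, `(C_φ f) n = f (φ n)`, is bounded. Then
`C_φ` is a left zero-divisor in `B(ℓᵖ)` if and only if `φ` is not surjective. -/
theorem composition_op_left_zeroDivisor_iff (p : ℝ≥0∞) [Fact (1 ≤ p)] (hp : p ≠ ⊤)
    (φ : ℕ → ℕ)
    (hfib : ∃ N : ℕ, ∀ n : ℕ, (φ ⁻¹' {n}).Finite ∧ (φ ⁻¹' {n}).ncard ≤ N)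
    (C : lp (fun _ : ℕ => ℂ) p →L[ℂ] lp (fun _ : ℕ => ℂ) p)
    (hC : ∀ (f : lp (fun _ : ℕ => ℂ) p) (n : ℕ), C f n = f (φ n)) :
    (∃ S : lp (fun _ : ℕ => ℂ) p →L[ℂ] lp (fun _ : ℕ => ℂ) p, S ≠ 0 ∧ C.comp S = 0) ↔
      ¬ Function.Surjective φ := by
  have hp0 : p ≠ 0 := by
    have h1 : (1 : ℝ≥0∞) ≤ p := Fact.out
    intro h; rw [h] at h1; exact (not_le.mpr one_pos) (by exact_mod_cast h1)
  constructor
  · rintro ⟨S, hS, hCS⟩ hsurj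
    apply hS
    ext f n
    have hCf : C (S f) = 0 := by
      have := congrArg (fun T => T f) hCS
      simpa using this
    -- C injective since φ surjective
    have : ∀ m, (S f) m = 0 := by
      intro m
      obtain ⟨k, hk⟩ := hsurj m
      have := hC (S f) k
      rw [hCf, hk] at this
      simpa using this.symm
    simpa using this n
  · intro hsurj
    obtain ⟨m, hm⟩ : ∃ m, ∀ n, φ n ≠ m := by
      simp only [Function.Surjective, not_forall] at hsurj
      obtain ⟨m, hm⟩ := hsurj
      exact ⟨m, fun n h => hm ⟨n, h⟩⟩
    set g : lp (fun _ : ℕ => ℂ) p := lp.single p m 1 with hg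
    let lin : lp (fun _ : ℕ => ℂ) p →ₗ[ℂ] lp (fun _ : ℕ => ℂ) p :=
      { toFun := fun f => (f 0) • g
        map_add' := by
          intro f h
          simp only [lp.coeFn_add, Pi.add_apply, add_smul]
        map_smul' := by
          intro c f
          simp only [lp.coeFn_smul, Pi.smul_apply, smul_smul, RingHom.id_apply,
            smul_eq_mul] }
    refine ⟨LinearMap.mkContinuous lin ‖g‖ ?_, ?_, ?_⟩
    · intro f
      have h1 : ‖lin f‖ = ‖f 0‖ * ‖g‖ := by
        show ‖(f 0) • g‖ = ‖f 0‖ * ‖g‖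
        rw [norm_smul]
      rw [h1, mul_comm]
      exact mul_le_mul_of_nonneg_left (lp.norm_apply_le_norm hp0 f 0) (norm_nonneg g)
    · intro h0
      have := congrArg (fun T => T (lp.single p 0 (1 : ℂ))) h0
      simp only [ContinuousLinearMap.zero_apply] at this
      have h2 : lin (lp.single p 0 (1 : ℂ)) = 0 := this
      have h3 : g = 0 := by
        have e : lin (lp.single p 0 (1 : ℂ)) =
            (((lp.single p 0 (1 : ℂ) : lp (fun _ : ℕ => ℂ) p) : ∀ _ : ℕ, ℂ) 0) • g := rfl
        rw [e, lp.single_apply_self, one_smul] at h2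
        exact h2
      have h4 : (g m : ℂ) = 1 := lp.single_apply_self p m 1
      rw [h3] at h4
      simp at h4
    · ext f n
      have h1 : C (lin f) n = (lin f) (φ n) := hC _ n
      have h2 : (lin f) (φ n) = (f 0) • (g (φ n)) := by
        show ((f 0) • g) (φ n) = _
        rw [lp.coeFn_smul]; rfl
      have h3 : (g (φ n) : ℂ) = 0 := lp.single_apply_ne p m 1 (hm n)
      simp [ContinuousLinearMap.comp_apply, LinearMap.mkContinuous_apply, h1, h2, h3]
end

section
/- Let 1 ≤ p < ∞ and let φ : ℕ → ℕ be a map such that the set {|φ⁻¹({n})| : n ∈ ℕ} of fiber cardinalities is bounded, so that the composition operator C_φ : ℓᵖ → ℓᵖ given by (C_φ f)(n) = f(φ(n)) is a bounded linear operator. Then C_φ is a topological divisor of zero in B(ℓᵖ) if and only if φ is not bijective. -/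
open Filter ENNReal

/-- `x` is a topological divisor of zero in a normed ring: there is a sequence of
norm-one elements whose products with `x` (on one side) tend to zero in norm. -/
def IsTDZ {A : Type*} [NormedRing A] (x : A) : Prop :=
  ∃ y : ℕ → A, (∀ n, ‖y n‖ = 1) ∧
    (Tendsto (fun n => ‖x * y n‖) atTop (nhds 0) ∨
      Tendsto (fun n => ‖y n * x‖) atTop (nhds 0))

/-!
If `φ` is bijective, then `C_φ` is a bijective bounded operator on a Banach space, hence
invertible by the open mapping theorem, and an invertible element `u` is never a topological
divisor of zero since `‖y‖ ≤ ‖u⁻¹‖ ‖u y‖`. If `φ` is not injective, say `φ a = φ b` with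
`a ≠ b`, the rank-one operator `f ↦ (f a - f b) • v` annihilates `C_φ` from the right; if `m`
is not in the range of `φ`, every operator with range in `𝕜 • δₘ` is annihilated by `C_φ`
from the left. Normalising such a zero divisor gives a constant norm-one sequence.
-/

open Function

section IsTDZ

variable {A : Type*} [NormedRing A]

lemma IsUnit.not_isTDZ {x : A} (hx : IsUnit x) : ¬ IsTDZ x := by
  obtain ⟨u, rfl⟩ := hx
  have not_tendsto : ∀ z : ℕ → ℝ, (∀ n, 1 ≤ ‖(↑u⁻¹ : A)‖ * z n) → ¬ Tendsto z atTop (nhds 0) :=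
    fun z hz hlim => by
      have := ge_of_tendsto' (by simpa using hlim.const_mul ‖(↑u⁻¹ : A)‖) hz
      norm_num at this
  rintro ⟨y, hy, hlim | hlim⟩
  · refine not_tendsto _ (fun n => ?_) hlim
    calc 1 = ‖↑u⁻¹ * (↑u * y n)‖ := by rw [u.inv_mul_cancel_left, hy]
      _ ≤ _ := norm_mul_le _ _
  · refine not_tendsto _ (fun n => ?_) hlim
    calc 1 = ‖y n * ↑u * ↑u⁻¹‖ := by rw [u.mul_inv_cancel_right, hy]
      _ ≤ _ := norm_mul_le _ _
      _ = _ := mul_comm _ _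

lemma IsTDZ.of_mul_eq_zero_right (𝕜 : Type*) [RCLike 𝕜] [NormedAlgebra 𝕜 A] {x y : A}
    (hy : y ≠ 0) (h : x * y = 0) : IsTDZ x :=
  ⟨fun _ => (‖y‖⁻¹ : 𝕜) • y, fun _ => norm_smul_inv_norm hy,
    Or.inl (by simp [h])⟩

lemma IsTDZ.of_mul_eq_zero_left (𝕜 : Type*) [RCLike 𝕜] [NormedAlgebra 𝕜 A] {x y : A}
    (hy : y ≠ 0) (h : y * x = 0) : IsTDZ x :=
  ⟨fun _ => (‖y‖⁻¹ : 𝕜) • y, fun _ => norm_smul_inv_norm hy,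
    Or.inr (by simp [h])⟩

end IsTDZ

lemma Memℓp.comp_equiv {ι ι' E : Type*} [NormedAddCommGroup E] {f : ι' → E} {p : ℝ≥0∞}
    (hf : Memℓp f p) (e : ι ≃ ι') : Memℓp (f ∘ e) p := by
  rcases p.trichotomy with rfl | rfl | hp
  · rw [memℓp_zero_iff] at hf ⊢
    exact hf.preimage e.injective.injOn
  · rw [memℓp_infty_iff] at hf ⊢
    rwa [← e.surjective.range_comp] at hf
  · rw [memℓp_gen_iff hp] at hf ⊢
    exact e.summable_iff.mpr hf

@[simp]
lemma lp.evalCLM_apply {ι 𝕜 : Type*} [NormedRing 𝕜] {E : ι → Type*}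
    [∀ i, NormedAddCommGroup (E i)] [∀ i, Module 𝕜 (E i)] [∀ i, IsBoundedSMul 𝕜 (E i)]
    {p : ℝ≥0∞} [Fact (1 ≤ p)] (i : ι) (f : lp E p) : lp.evalCLM 𝕜 E p i f = f i :=
  rfl

def IsCompositionOperator {ι 𝕜 : Type*} [NormedField 𝕜] {p : ℝ≥0∞} [Fact (1 ≤ p)]
    (φ : ι → ι) (C : lp (fun _ : ι => 𝕜) p →L[𝕜] lp (fun _ : ι => 𝕜) p) : Prop :=
  ∀ f i, C f i = f (φ i)

namespace IsCompositionOperator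

variable {ι 𝕜 : Type*} [NontriviallyNormedField 𝕜] {p : ℝ≥0∞} [Fact (1 ≤ p)] {φ : ι → ι}
  {C : lp (fun _ : ι => 𝕜) p →L[𝕜] lp (fun _ : ι => 𝕜) p}

lemma exists_ne_zero_mul_eq_zero_of_not_injective (hC : IsCompositionOperator φ C)
    (hφ : ¬ Injective φ) : ∃ T ≠ 0, T * C = 0 := by
  classical
  obtain ⟨a, b, hab, hne⟩ := not_injective_iff.mp hφ
  let v := lp.single (E := fun _ : ι => 𝕜) p a 1
  refine ⟨(lp.evalCLM 𝕜 (fun _ => 𝕜) p a - lp.evalCLM 𝕜 (fun _ => 𝕜) p b).smulRight v,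
    fun h => ?_, ?_⟩
  · have := congr($h v a)
    simp [v, Pi.single_eq_of_ne hne.symm] at this
  · ext f : 1
    simp [hC f, hab]

lemma exists_ne_zero_mul_eq_zero_of_not_surjective (hC : IsCompositionOperator φ C)
    (hφ : ¬ Surjective φ) : ∃ T ≠ 0, C * T = 0 := by
  classical
  obtain ⟨m, hm⟩ := not_forall.mp hφ
  let v := lp.single (E := fun _ : ι => 𝕜) p m 1
  refine ⟨(lp.evalCLM 𝕜 (fun _ => 𝕜) p m).smulRight v, fun h => ?_, ?_⟩
  · have := congr($h v m)
    simp [v] at this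
  · have hCv : C v = 0 := lp.ext <| funext fun i => by
      rw [hC]
      simp [v, Pi.single_eq_of_ne (fun h => hm ⟨i, h⟩)]
    ext f : 1
    simp [hCv]

lemma isUnit [CompleteSpace 𝕜] (hC : IsCompositionOperator φ C) (hφ : Bijective φ) :
    IsUnit C := by
  rw [ContinuousLinearMap.isUnit_iff_bijective]
  let e := Equiv.ofBijective φ hφ
  refine ⟨fun f g hfg => lp.ext (funext fun j => ?_), fun g => ?_⟩
  · obtain ⟨i, rfl⟩ := hφ.2 j
    rw [← hC f i, ← hC g i, hfg]
  · refine ⟨⟨g ∘ e.symm, (lp.memℓp g).comp_equiv e.symm⟩, lp.ext (funext fun i => ?_)⟩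
    rw [hC]
    simp [e]

end IsCompositionOperator

theorem composition_op_tdz_iff_not_bijective_general (p : ℝ≥0∞) [Fact (1 ≤ p)]
    (φ : ℕ → ℕ)
    (C : lp (fun _ : ℕ => ℂ) p →L[ℂ] lp (fun _ : ℕ => ℂ) p)
    (hC : ∀ (f : lp (fun _ : ℕ => ℂ) p) (n : ℕ), C f n = f (φ n)) :
    IsTDZ C ↔ ¬ Function.Bijective φ := by
  have hC : IsCompositionOperator φ C := hC
  refine ⟨fun hTDZ hφ => (hC.isUnit hφ).not_isTDZ hTDZ, fun hφ => ?_⟩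
  rcases not_and_or.mp hφ with hinj | hsurj
  · obtain ⟨T, hT, hTC⟩ := hC.exists_ne_zero_mul_eq_zero_of_not_injective hinj
    exact IsTDZ.of_mul_eq_zero_left ℂ hT hTC
  · obtain ⟨T, hT, hCT⟩ := hC.exists_ne_zero_mul_eq_zero_of_not_surjective hsurj
    exact IsTDZ.of_mul_eq_zero_right ℂ hT hCT

/-- Let `1 ≤ p < ∞` and let `φ : ℕ → ℕ` have uniformly bounded fiber cardinalities, so
that the composition operator `C_φ : ℓᵖ → ℓᵖ`, `(C_φ f) n = f (φ n)`, is bounded. Then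
`C_φ` is a topological divisor of zero in `B(ℓᵖ)` if and only if `φ` is not bijective. -/
theorem composition_op_tdz_iff_not_bijective (p : ℝ≥0∞) [Fact (1 ≤ p)] (hp : p ≠ ⊤)
    (φ : ℕ → ℕ)
    (hfib : ∃ N : ℕ, ∀ n : ℕ, (φ ⁻¹' {n}).Finite ∧ (φ ⁻¹' {n}).ncard ≤ N)
    (C : lp (fun _ : ℕ => ℂ) p →L[ℂ] lp (fun _ : ℕ => ℂ) p)
    (hC : ∀ (f : lp (fun _ : ℕ => ℂ) p) (n : ℕ), C f n = f (φ n)) :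
    IsTDZ C ↔ ¬ Function.Bijective φ :=
  composition_op_tdz_iff_not_bijective_general p φ C hC
end

section
/- Let 1 ≤ p < ∞ and let φ₁, φ₂ : ℕ → ℕ be maps, each with uniformly bounded fiber cardinalities, inducing bounded composition operators C_{φ₁}, C_{φ₂} on ℓᵖ given by (C_{φᵢ} f)(n) = f(φᵢ(n)). If φ₁ is not surjective or φ₂ is not injective, then the operator C_{φ₂}∘C_{φ₁} is a topological divisor of zero in B(ℓᵖ). -/
open Filter ENNReal

lemma isTDZ_of_zero_divisor {A : Type*} [NormedRing A] [NormedSpace ℝ A]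
    [IsScalarTower ℝ A A] [SMulCommClass ℝ A A]
    (x y₀ : A) (h0 : y₀ ≠ 0) (h : x * y₀ = 0 ∨ y₀ * x = 0) : IsTDZ x := by
  have hn : ‖y₀‖ ≠ 0 := norm_ne_zero_iff.mpr h0
  refine ⟨fun _ => ‖y₀‖⁻¹ • y₀, fun n => ?_, ?_⟩
  · rw [norm_smul, norm_inv, norm_norm, inv_mul_cancel₀ hn]
  · rcases h with h | h
    · left
      have : ∀ n : ℕ, ‖x * (‖y₀‖⁻¹ • y₀)‖ = 0 := by
        intro n; rw [mul_smul_comm, h, smul_zero, norm_zero]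
      simpa [this 0] using tendsto_const_nhds (α := ℝ) (f := atTop (α := ℕ))
    · right
      have : ‖(‖y₀‖⁻¹ • y₀) * x‖ = 0 := by
        rw [smul_mul_assoc, h, smul_zero, norm_zero]
      simpa [this] using tendsto_const_nhds (α := ℝ) (f := atTop (α := ℕ))

set_option maxHeartbeats 1000000 in
/-- Let `1 ≤ p < ∞` and let `φ₁, φ₂ : ℕ → ℕ` have uniformly bounded fiber
cardinalities, inducing bounded composition operators `C_{φ₁}, C_{φ₂}` on `ℓᵖ`. If `φ₁`
is not surjective or `φ₂` is not injective, then `C_{φ₂} ∘ C_{φ₁}` is a topological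
divisor of zero in `B(ℓᵖ)`. -/
theorem composition_op_product_tdz (p : ℝ≥0∞) [Fact (1 ≤ p)] (hp : p ≠ ⊤)
    (φ₁ φ₂ : ℕ → ℕ)
    (hfib₁ : ∃ N : ℕ, ∀ n : ℕ, (φ₁ ⁻¹' {n}).Finite ∧ (φ₁ ⁻¹' {n}).ncard ≤ N)
    (hfib₂ : ∃ N : ℕ, ∀ n : ℕ, (φ₂ ⁻¹' {n}).Finite ∧ (φ₂ ⁻¹' {n}).ncard ≤ N)
    (C₁ C₂ : lp (fun _ : ℕ => ℂ) p →L[ℂ] lp (fun _ : ℕ => ℂ) p)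
    (hC₁ : ∀ (f : lp (fun _ : ℕ => ℂ) p) (n : ℕ), C₁ f n = f (φ₁ n))
    (hC₂ : ∀ (f : lp (fun _ : ℕ => ℂ) p) (n : ℕ), C₂ f n = f (φ₂ n))
    (h : ¬ Function.Surjective φ₁ ∨ ¬ Function.Injective φ₂) :
    IsTDZ (C₂.comp C₁) := by
  have hp0 : p ≠ 0 := by
    have h1 : (1 : ℝ≥0∞) ≤ p := Fact.out
    intro hz; rw [hz] at h1; exact (not_le.mpr zero_lt_one) h1
  rcases h with h | h
  · -- φ₁ not surjective
    rw [Function.Surjective] at h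
    push_neg at h
    obtain ⟨m, hm⟩ := h
    set s : lp (fun _ : ℕ => ℂ) p := lp.single p m (1 : ℂ) with hs
    -- y₀ f = f m • s
    let L : lp (fun _ : ℕ => ℂ) p →ₗ[ℂ] lp (fun _ : ℕ => ℂ) p :=
      { toFun := fun f => f m • s
        map_add' := by
          intro f g
          have h1 : ((f + g : lp (fun _ : ℕ => ℂ) p) : ℕ → ℂ) = ⇑f + ⇑g := lp.coeFn_add f g
          simp only [h1, Pi.add_apply, add_smul]
        map_smul' := by
          intro c f
          have h1 : ((c • f : lp (fun _ : ℕ => ℂ) p) : ℕ → ℂ) = c • ⇑f := lp.coeFn_smul c f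
          simp only [h1, Pi.smul_apply, smul_eq_mul, smul_smul, RingHom.id_apply] }
    have hL : ∀ f, ‖L f‖ ≤ ‖s‖ * ‖f‖ := by
      intro f
      calc ‖f m • s‖ = ‖f m‖ * ‖s‖ := norm_smul _ _
        _ ≤ ‖f‖ * ‖s‖ := by
            exact mul_le_mul_of_nonneg_right (lp.norm_apply_le_norm hp0 f m) (norm_nonneg s)
        _ = ‖s‖ * ‖f‖ := mul_comm _ _
    let y₀ : lp (fun _ : ℕ => ℂ) p →L[ℂ] lp (fun _ : ℕ => ℂ) p :=
      L.mkContinuous ‖s‖ hL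
    have hsm : s m = 1 := lp.single_apply_self p m 1
    have hy0 : y₀ ≠ 0 := by
      intro hz
      have : y₀ s = 0 := by rw [hz]; rfl
      have h1 : y₀ s = s := by
        show L s = s
        show s m • s = s
        rw [hsm, one_smul]
      rw [h1] at this
      have : s m = 0 := by rw [this]; rfl
      rw [hsm] at this
      exact one_ne_zero this
    refine isTDZ_of_zero_divisor _ y₀ hy0 (Or.inl ?_)
    ext f n
    show C₂ (C₁ (y₀ f)) n = (0 : lp (fun _ : ℕ => ℂ) p →L[ℂ] lp (fun _ : ℕ => ℂ) p) f n
    rw [hC₂, hC₁]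
    have : y₀ f = f m • s := rfl
    rw [this, lp.coeFn_smul, Pi.smul_apply]
    have : s (φ₁ (φ₂ n)) = 0 := lp.single_apply_ne p m 1 (hm (φ₂ n))
    rw [this, smul_zero]
    rfl
  · -- φ₂ not injective
    rw [Function.Injective] at h
    push_neg at h
    obtain ⟨a, b, hab, hne⟩ := h
    set s : lp (fun _ : ℕ => ℂ) p := lp.single p 0 (1 : ℂ) with hs
    let L : lp (fun _ : ℕ => ℂ) p →ₗ[ℂ] lp (fun _ : ℕ => ℂ) p :=
      { toFun := fun f => (f a - f b) • s
        map_add' := by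
          intro f g
          have h1 : ((f + g : lp (fun _ : ℕ => ℂ) p) : ℕ → ℂ) = ⇑f + ⇑g := lp.coeFn_add f g
          simp only [h1, Pi.add_apply]
          rw [show (f a + g a) - (f b + g b) = (f a - f b) + (g a - g b) by ring, add_smul]
        map_smul' := by
          intro c f
          have h1 : ((c • f : lp (fun _ : ℕ => ℂ) p) : ℕ → ℂ) = c • ⇑f := lp.coeFn_smul c f
          simp only [h1, Pi.smul_apply, smul_eq_mul, RingHom.id_apply, ← mul_sub, smul_smul] }
    have hL : ∀ f, ‖L f‖ ≤ (2 * ‖s‖) * ‖f‖ := by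
      intro f
      calc ‖(f a - f b) • s‖ = ‖f a - f b‖ * ‖s‖ := norm_smul _ _
        _ ≤ (‖f‖ + ‖f‖) * ‖s‖ := by
            refine mul_le_mul_of_nonneg_right ?_ (norm_nonneg s)
            exact (norm_sub_le _ _).trans
              (add_le_add (lp.norm_apply_le_norm hp0 f a) (lp.norm_apply_le_norm hp0 f b))
        _ = (2 * ‖s‖) * ‖f‖ := by ring
    let y₀ : lp (fun _ : ℕ => ℂ) p →L[ℂ] lp (fun _ : ℕ => ℂ) p :=
      L.mkContinuous (2 * ‖s‖) hL
    have hy0 : y₀ ≠ 0 := by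
      intro hz
      set e : lp (fun _ : ℕ => ℂ) p := lp.single p a (1 : ℂ) with he
      have h1 : y₀ e = s := by
        show L e = s
        show (e a - e b) • s = s
        have h2 : e a = 1 := lp.single_apply_self p a 1
        have h3 : e b = 0 := lp.single_apply_ne p a 1 (fun hc => hne hc.symm)
        rw [h2, h3, sub_zero, one_smul]
      have : y₀ e = 0 := by rw [hz]; rfl
      rw [h1] at this
      have h4 : s 0 = 0 := by rw [this]; rfl
      rw [lp.single_apply_self p 0 1] at h4
      exact one_ne_zero h4
    refine isTDZ_of_zero_divisor _ y₀ hy0 (Or.inr ?_)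
    ext f n
    show y₀ (C₂ (C₁ f)) n =
      (0 : lp (fun _ : ℕ => ℂ) p →L[ℂ] lp (fun _ : ℕ => ℂ) p) f n
    have h1 : y₀ (C₂ (C₁ f)) = ((C₂ (C₁ f)) a - (C₂ (C₁ f)) b) • s := rfl
    rw [h1, hC₂, hC₂, hC₁, hC₁, hab, sub_self]
    rw [lp.coeFn_smul, Pi.smul_apply, zero_smul]
    rfl
end
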